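/- Let Σ be a signed simple graph with even chromatic number χ(Σ) = 2k, let κ be a minimal proper coloration of Σ, and suppose the color i of the color set {±1,…,±k} is not used by κ. Then there is a negative edge of Σ both of whose endpoints are colored −i; in particular at least two vertices are colored −i. -/

import Mathlib

/-- A signed simple graph: two edge-disjoint simple graphs on the same vertex set,
the positive edges and the negative edges. -/
structure SignedGraph (V : Type*) where
  pos : SimpleGraph V
  neg : SimpleGraph V
  disjoint : ∀ a b : V, ¬ (pos.Adj a b ∧ neg.Adj a b)

/-- The color set of size `n`: `{±1, …, ±k}` if `n = 2k`, and `{0, ±1, …, ±k}` if `n = 2k+1`. -/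
noncomputable def signedColorSet (n : ℕ) : Finset ℤ :=
  if Even n then (Finset.Icc (-((n / 2 : ℕ) : ℤ)) ((n / 2 : ℕ) : ℤ)).erase 0
  else Finset.Icc (-((n / 2 : ℕ) : ℤ)) ((n / 2 : ℕ) : ℤ)

/-- A proper coloration of a signed graph using the color set of size `n`. -/
def IsProperColoration {V : Type*} (S : SignedGraph V) (n : ℕ) (κ : V → ℤ) : Prop :=
  (∀ v, κ v ∈ signedColorSet n) ∧
  (∀ a b, S.pos.Adj a b → κ a ≠ κ b) ∧
  (∀ a b, S.neg.Adj a b → κ a ≠ -κ b)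

/-- The chromatic number: the least size of a color set admitting a proper coloration. -/
noncomputable def sChromaticNumber {V : Type*} (S : SignedGraph V) : ℕ :=
  sInf {n : ℕ | ∃ κ : V → ℤ, IsProperColoration S n κ}

/-- A minimal coloration: a proper coloration using the color set of size `χ(Σ)`. -/
def IsMinimalColoration {V : Type*} (S : SignedGraph V) (κ : V → ℤ) : Prop :=
  IsProperColoration S (sChromaticNumber S) κ

/-- The deficiency of a coloration: the number of unused colors from the color set of size `n`. -/
noncomputable def sDeficiency {V : Type*} [Fintype V] (n : ℕ) (κ : V → ℤ) : ℕ :=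
  (signedColorSet n \ Finset.image κ Finset.univ).card

/-- Maximum deficiency over minimal colorations. -/
noncomputable def maxDef {V : Type*} [Fintype V] (S : SignedGraph V) : ℕ :=
  sSup {d : ℕ | ∃ κ : V → ℤ, IsMinimalColoration S κ ∧ sDeficiency (sChromaticNumber S) κ = d}

/-- Minimum deficiency over minimal colorations. -/
noncomputable def minDef {V : Type*} [Fintype V] (S : SignedGraph V) : ℕ :=
  sInf {d : ℕ | ∃ κ : V → ℤ, IsMinimalColoration S κ ∧ sDeficiency (sChromaticNumber S) κ = d}

/-- A stable cover of the positive edges: a vertex cover of `E⁺` that is stable in `Σ`. -/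
def IsStableCover {V : Type*} (S : SignedGraph V) (T : Set V) : Prop :=
  (∀ a b, S.pos.Adj a b → a ∈ T ∨ b ∈ T) ∧
  (∀ a ∈ T, ∀ b ∈ T, ¬ S.pos.Adj a b ∧ ¬ S.neg.Adj a b)

/-- An edge `ab` has exactly one endpoint in `A`. -/
def crossing {V : Type*} (A : Set V) (a b : V) : Prop := ¬ ((a ∈ A) ↔ (b ∈ A))

/-- Switching a signed graph at a vertex set `A`: the sign of every edge with exactly one
endpoint in `A` is negated. -/
def SignedGraph.switch {V : Type*} (S : SignedGraph V) (A : Set V) : SignedGraph V where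
  pos :=
    { Adj := fun a b => (S.pos.Adj a b ∧ ¬ crossing A a b) ∨ (S.neg.Adj a b ∧ crossing A a b)
      symm := by
        constructor
        intro a b h
        unfold crossing at *
        rcases h with ⟨h1, h2⟩ | ⟨h1, h2⟩
        · exact Or.inl ⟨h1.symm, by tauto⟩
        · exact Or.inr ⟨h1.symm, by tauto⟩
      loopless := by
        constructor
        intro a h
        rcases h with ⟨h1, _⟩ | ⟨_, h2⟩
        · exact S.pos.loopless.irrefl a h1
        · exact h2 Iff.rfl }
  neg :=
    { Adj := fun a b => (S.neg.Adj a b ∧ ¬ crossing A a b) ∨ (S.pos.Adj a b ∧ crossing A a b)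
      symm := by
        constructor
        intro a b h
        unfold crossing at *
        rcases h with ⟨h1, h2⟩ | ⟨h1, h2⟩
        · exact Or.inl ⟨h1.symm, by tauto⟩
        · exact Or.inr ⟨h1.symm, by tauto⟩
      loopless := by
        constructor
        intro a h
        rcases h with ⟨h1, _⟩ | ⟨_, h2⟩
        · exact S.neg.loopless.irrefl a h1
        · exact h2 Iff.rfl }
  disjoint := by
    intro a b h
    have := S.disjoint a b
    tauto

/-- General proper coloration with an arbitrary color set `C ⊆ ℤ`. -/
def IsProperWith {V : Type*} (S : SignedGraph V) (C : Set ℤ) (κ : V → ℤ) : Prop :=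
  (∀ v, κ v ∈ C) ∧
  (∀ a b, S.pos.Adj a b → κ a ≠ κ b) ∧
  (∀ a b, S.neg.Adj a b → κ a ≠ -κ b)

open Classical in
/-- The coloration switching equivalent to `κ` via `A`: negate the colors on `A`. -/
noncomputable def switchColor {V : Type*} (A : Set V) (κ : V → ℤ) : V → ℤ :=
  fun v => if v ∈ A then -κ v else κ v

/-- The adjacency of the forcing graph `F(Σ)` for the matching `m`:
a directed edge from `x` to `y` whenever `x ȳ` is a negative edge. -/
def ForcingAdj {V : Type*} (S : SignedGraph V) (m : V → V) (x y : V) : Prop :=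
  S.neg.Adj x (m y)

/-! If no negative edge has both ends colored `-i`, recolor the class `-i` by `0`; this stays
proper because `0` was not a color before. The colors now avoid `±i`, and the odd bijection of `ℤ`
exchanging `±i` with `±k` moves them into `{0, ±1, …, ±(k-1)}`, a color set of size `2k - 1`
contradicting `χ(Σ) = 2k`. -/

open Set

lemma signedColorSet_two_mul (k : ℕ) :
    signedColorSet (2 * k) = (Finset.Icc (-(k : ℤ)) k).erase 0 := by
  simp [signedColorSet]

lemma signedColorSet_two_mul_add_one (m : ℕ) :
    signedColorSet (2 * m + 1) = Finset.Icc (-(m : ℤ)) m := by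
  have hodd : ¬ Even (2 * m + 1) := Nat.not_even_iff_odd.mpr (odd_two_mul_add_one m)
  simp only [signedColorSet, hodd, if_false]
  congr <;> omega

lemma isProperColoration_iff_isProperWith {V : Type*} (S : SignedGraph V) (n : ℕ) (κ : V → ℤ) :
    IsProperColoration S n κ ↔ IsProperWith S (signedColorSet n) κ :=
  Iff.rfl

lemma sChromaticNumber_le {V : Type*} {S : SignedGraph V} {n : ℕ} {κ : V → ℤ}
    (hκ : IsProperColoration S n κ) : sChromaticNumber S ≤ n :=
  Nat.sInf_le ⟨κ, hκ⟩

namespace IsProperWith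

variable {V : Type*} {S : SignedGraph V} {C : Set ℤ} {κ : V → ℤ}

lemma comp {D : Set ℤ} {g : ℤ → ℤ} (hg : Function.Injective g) (hodd : ∀ x, g (-x) = -g x)
    (hmaps : MapsTo g C D) (hκ : IsProperWith S C κ) : IsProperWith S D (g ∘ κ) := by
  obtain ⟨hmem, hpos, hneg⟩ := hκ
  refine ⟨fun v => hmaps (hmem v), fun a b hab => hg.ne (hpos a b hab), fun a b hab => ?_⟩
  rw [Function.comp_apply, Function.comp_apply, ← hodd]
  exact hg.ne (hneg a b hab)

lemma recolor_zero (hC : 0 ∉ C) (hκ : IsProperWith S C κ) {c : ℤ}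
    (hc : ∀ a b, S.neg.Adj a b → κ a = c → κ b ≠ c) :
    IsProperWith S (insert 0 (C \ {c})) (fun v => if κ v = c then 0 else κ v) := by
  obtain ⟨hmem, hpos, hneg⟩ := hκ
  have hne0 : ∀ v, κ v ≠ 0 := fun v h => hC (h ▸ hmem v)
  refine ⟨fun v => ?_, fun a b hab => ?_, fun a b hab => ?_⟩ <;> dsimp only
  · split_ifs with hv
    · exact mem_insert 0 _
    · exact mem_insert_of_mem 0 ⟨hmem v, hv⟩
  · split_ifs <;> grind [hpos a b hab, hne0 a, hne0 b]
  · split_ifs <;> grind [hneg a b hab, hc a b hab, hne0 a, hne0 b]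

end IsProperWith

def signedSwap (i k : ℤ) : Equiv.Perm ℤ :=
  Equiv.swap i k * Equiv.swap (-i) (-k)

lemma signedSwap_neg {i k : ℤ} (hi : i ≠ 0) (hk : k ≠ 0) (x : ℤ) :
    signedSwap i k (-x) = -signedSwap i k x := by
  simp only [signedSwap, Equiv.Perm.mul_apply, Equiv.swap_apply_def]
  split_ifs <;> omega

lemma signedSwap_mem_Icc {i m x : ℤ} (hi0 : i ≠ 0) (hi : i ∈ Icc (-(m + 1)) (m + 1))
    (hx : x ∈ Icc (-(m + 1)) (m + 1)) (hxi : x ≠ i) (hxi' : x ≠ -i) :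
    signedSwap i (m + 1) x ∈ Icc (-m) m := by
  simp only [mem_Icc] at hi hx ⊢
  simp only [signedSwap, Equiv.Perm.mul_apply, Equiv.swap_apply_def]
  split_ifs <;> omega

theorem unused_color_even_general {V : Type*} (S : SignedGraph V) (k : ℕ)
    (h : sChromaticNumber S = 2 * k)
    (κ : V → ℤ) (hκ : IsMinimalColoration S κ)
    (i : ℤ) (hi : i ∈ signedColorSet (2 * k)) (hiu : ∀ v, κ v ≠ i) :
    (∃ a b : V, S.neg.Adj a b ∧ κ a = -i ∧ κ b = -i) ∧
      (∃ a b : V, a ≠ b ∧ κ a = -i ∧ κ b = -i) := by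
  rw [signedColorSet_two_mul, Finset.mem_erase, Finset.mem_Icc] at hi
  obtain ⟨m, rfl⟩ : ∃ m, k = m + 1 := ⟨k - 1, by omega⟩
  suffices ∃ a b, S.neg.Adj a b ∧ κ a = -i ∧ κ b = -i by
    obtain ⟨a, b, hab, ha, hb⟩ := this
    exact ⟨⟨a, b, hab, ha, hb⟩, a, b, hab.ne, ha, hb⟩
  by_contra! hc
  have hκi : IsProperWith S (↑(signedColorSet (2 * (m + 1))) \ {i}) κ := by
    obtain ⟨hmem, hadj⟩ : IsProperColoration S (2 * (m + 1)) κ := by rwa [← h]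
    exact ⟨fun v => ⟨hmem v, hiu v⟩, hadj⟩
  have hmaps : MapsTo (signedSwap i ((m : ℤ) + 1))
      (insert 0 ((↑(signedColorSet (2 * (m + 1))) \ {i}) \ {-i}))
      (signedColorSet (2 * m + 1)) := by
    rintro x hx
    simp only [mem_insert_iff, mem_sdiff, Finset.mem_coe, signedColorSet_two_mul,
      Finset.mem_erase, Finset.mem_Icc, mem_singleton_iff] at hx
    rw [Finset.mem_coe, signedColorSet_two_mul_add_one, Finset.mem_Icc]
    push_cast at hi hx
    exact signedSwap_mem_Icc hi.1 ⟨by omega, by omega⟩ ⟨by omega, by omega⟩ (by omega) (by omega)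
  have hsmall := ((hκi.recolor_zero (by simp [signedColorSet_two_mul]) hc).comp
    (Equiv.injective _) (signedSwap_neg (by omega) (by omega)) hmaps)
  have := sChromaticNumber_le ((isProperColoration_iff_isProperWith ..).mpr hsmall)
  omega

/-- If `χ(Σ) = 2k`, `κ` is a minimal coloration, and the color `i` of the
color set is unused, then some negative edge has both endpoints colored `-i`;
in particular at least two vertices are colored `-i`. -/
theorem unused_color_even {V : Type*} [Fintype V] (S : SignedGraph V) (k : ℕ)
    (h : sChromaticNumber S = 2 * k)
    (κ : V → ℤ) (hκ : IsMinimalColoration S κ)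
    (i : ℤ) (hi : i ∈ signedColorSet (2 * k)) (hiu : ∀ v, κ v ≠ i) :
    (∃ a b : V, S.neg.Adj a b ∧ κ a = -i ∧ κ b = -i) ∧
      (∃ a b : V, a ≠ b ∧ κ a = -i ∧ κ b = -i) :=
  unused_color_even_general S k h κ hκ i hi hiu
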